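/- Let g_1 be a quadratic Lie algebra with invariant scalar product B_1, let g_2 be a Lie algebra, and let φ: g_2 → Der(g_1, B_1) be a Lie algebra homomorphism into the B_1-skew-symmetric derivations of g_1. Then the vector space g = g_2 ⊕ g_1 ⊕ g_2* with bracket [x_2+x_1+f, y_2+y_1+h] = [x_2,y_2] + ([x_1,y_1] + φ(x_2)(y_1) − φ(y_2)(x_1)) + (π(x_2)(h) − π(y_2)(f) + ψ(x_1,y_1)), where π is the coadjoint representation of g_2 and ψ(x_1,y_1)(z_2) = B_1(φ(z_2)(x_1), y_1), is a Lie algebra. -/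

import Mathlib

/-! Bilinearity is immediate, and alternation reduces to `B₁ (φ w a) a = 0`, which follows from
skewness and symmetry once `2` is cancellable. In the Jacobi identity the `g₂`- and
`g₁`-components are the Jacobi identities of `g₂` and `g₁` corrected by the derivation and
homomorphism properties of `φ`. Evaluated at `w`, the `g₂*`-component splits into coadjoint terms,
which cancel by the Jacobi identity of `g₂`; the cyclic sum of `B₁ (φ w ⁅a, b⁆) c`, which vanishes
because `φ w` is a skew derivation of an invariant symmetric form; and, after expanding
`φ ⁅z, w⁆ = φ z φ w - φ w φ z`, pairs `B₁ (φ z (φ w a)) b = B₁ (φ w (φ z b)) a` given by the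
skewness of `φ z` and `φ w`. -/

section
variable {K : Type*} [Field K] [CharZero K]
  {L₁ : Type*} [LieRing L₁] [LieAlgebra K L₁]
  {L₂ : Type*} [LieRing L₂] [LieAlgebra K L₂]

/-- The bracket of the double extension of `(g₁, B₁)` by `g₂` via `φ`, on the vector space
`g₂ × g₁ × g₂^*`:
`⁅(x₂,x₁,f),(y₂,y₁,h)⁆ = (⁅x₂,y₂⁆, ⁅x₁,y₁⁆ + φ(x₂)(y₁) - φ(y₂)(x₁),
  π(x₂)(h) - π(y₂)(f) + ψ(x₁,y₁))`
where `π` is the coadjoint representation `(π(x)(f))(y) = -f ⁅x,y⁆`, and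
`ψ(x₁,y₁)(z₂) = B₁ (φ(z₂)(x₁)) y₁`. -/
noncomputable def doubleExtBracket (B₁ : LinearMap.BilinForm K L₁)
    (φ : L₂ →ₗ[K] Module.End K L₁)
    (x y : L₂ × L₁ × Module.Dual K L₂) : L₂ × L₁ × Module.Dual K L₂ :=
  (⁅x.1, y.1⁆,
   ⁅x.2.1, y.2.1⁆ + φ x.1 y.2.1 - φ y.1 x.2.1,
   x.2.2.comp (LieAlgebra.ad K L₂ y.1)
     - y.2.2.comp (LieAlgebra.ad K L₂ x.1)
     + (B₁.flip y.2.1).comp ((LinearMap.applyₗ x.2.1).comp φ))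

end

theorem lie_lie_add_lie_lie_add_lie_lie {L : Type*} [LieRing L] (x y z : L) :
    ⁅⁅x, y⁆, z⁆ + ⁅⁅y, z⁆, x⁆ + ⁅⁅z, x⁆, y⁆ = 0 := by
  rw [← lie_skew ⁅x, y⁆ z, ← lie_skew ⁅y, z⁆ x, ← lie_skew ⁅z, x⁆ y, ← neg_add, ← neg_add,
    neg_eq_zero]
  exact lie_jacobi z x y

section SkewEndomorphism

variable {R M : Type*} [CommRing R] [AddCommGroup M] [Module R M] {B : LinearMap.BilinForm R M}
  (hsymm : ∀ x y : M, B x y = B y x)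
include hsymm

theorem apply_self_eq_zero_of_skew [IsAddTorsionFree R] {D : Module.End R M}
    (hD : ∀ a b : M, B (D a) b = - B a (D b)) (a : M) : B (D a) a = 0 := by
  have h := hD a a
  rw [hsymm a] at h
  exact self_eq_neg.mp h

theorem apply_apply_eq_apply_apply_of_skew {D E : Module.End R M}
    (hD : ∀ a b : M, B (D a) b = - B a (D b)) (hE : ∀ a b : M, B (E a) b = - B a (E b))
    (a b : M) : B (D (E a)) b = B (E (D b)) a := by
  linear_combination hD (E a) b - hE a (D b) + hsymm a (E (D b))

end SkewEndomorphism

theorem cyclic_sum_apply_skew_derivation_lie_eq_zero {R L : Type*} [CommRing R] [LieRing L]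
    [LieAlgebra R L] {B : LinearMap.BilinForm R L} (hsymm : ∀ x y : L, B x y = B y x)
    (hinv : ∀ x y z : L, B ⁅x, y⁆ z = B x ⁅y, z⁆) {D : Module.End R L}
    (hder : ∀ a b : L, D ⁅a, b⁆ = ⁅D a, b⁆ + ⁅a, D b⁆)
    (hskew : ∀ a b : L, B (D a) b = - B a (D b)) (a b c : L) :
    B (D ⁅a, b⁆) c + B (D ⁅b, c⁆) a + B (D ⁅c, a⁆) b = 0 := by
  have hexpand : B (D ⁅a, b⁆) c = B ⁅D a, b⁆ c + B ⁅a, D b⁆ c := by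
    rw [hder, map_add, LinearMap.add_apply]
  -- moving `D` across `B` turns `B ⁅D a, b⁆ c` into `- B (D ⁅b, c⁆) a`, and `B ⁅a, D b⁆ c`
  -- into `- B (D ⁅c, a⁆) b`
  linear_combination hexpand + hinv (D a) b c + hsymm (D a) ⁅b, c⁆ + hskew ⁅b, c⁆ a
    - hinv c a (D b) - hsymm c ⁅a, D b⁆ + hskew ⁅c, a⁆ b

section DoubleExtension

variable {K L₁ L₂ : Type*} [Field K] [LieRing L₁] [LieAlgebra K L₁] [LieRing L₂] [LieAlgebra K L₂]
  (B₁ : LinearMap.BilinForm K L₁) (φ : L₂ →ₗ[K] Module.End K L₁)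
  (X Y Z : L₂ × L₁ × Module.Dual K L₂)

@[simp]
theorem doubleExtBracket_fst : (doubleExtBracket B₁ φ X Y).1 = ⁅X.1, Y.1⁆ := rfl

@[simp]
theorem doubleExtBracket_snd_fst :
    (doubleExtBracket B₁ φ X Y).2.1 = ⁅X.2.1, Y.2.1⁆ + φ X.1 Y.2.1 - φ Y.1 X.2.1 := rfl

@[simp]
theorem doubleExtBracket_snd_snd_apply (w : L₂) :
    (doubleExtBracket B₁ φ X Y).2.2 w = X.2.2 ⁅Y.1, w⁆ - Y.2.2 ⁅X.1, w⁆ + B₁ (φ w X.2.1) Y.2.1 :=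
  rfl

theorem doubleExtBracket_add_left :
    doubleExtBracket B₁ φ (X + Y) Z = doubleExtBracket B₁ φ X Z + doubleExtBracket B₁ φ Y Z := by
  ext
  · simp
  · simp only [doubleExtBracket_snd_fst, Prod.snd_add, Prod.fst_add, add_lie, map_add,
      LinearMap.add_apply]
    abel
  · simp only [doubleExtBracket_snd_snd_apply, Prod.snd_add, LinearMap.add_apply, Prod.fst_add,
      add_lie, map_add]
    ring

theorem doubleExtBracket_smul_left (c : K) :
    doubleExtBracket B₁ φ (c • X) Y = c • doubleExtBracket B₁ φ X Y := by
  ext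
  · simp
  · simp [smul_sub, smul_add]
  · simp only [doubleExtBracket_snd_snd_apply, Prod.smul_snd, LinearMap.smul_apply, smul_eq_mul,
      Prod.smul_fst, smul_lie, map_smul]
    ring

theorem doubleExtBracket_self [IsAddTorsionFree K] (hsymm : ∀ x y : L₁, B₁ x y = B₁ y x)
    (hφskew : ∀ z : L₂, ∀ a b : L₁, B₁ (φ z a) b = - B₁ a (φ z b)) :
    doubleExtBracket B₁ φ X X = 0 := by
  ext w
  · simp
  · simp
  · simpa using apply_self_eq_zero_of_skew hsymm (hφskew w) X.2.1

theorem doubleExtBracket_jacobi_snd_fst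
    (hφder : ∀ z : L₂, ∀ a b : L₁, φ z ⁅a, b⁆ = ⁅φ z a, b⁆ + ⁅a, φ z b⁆)
    (hφhom : ∀ w z : L₂, φ ⁅w, z⁆ = φ w * φ z - φ z * φ w) :
    (doubleExtBracket B₁ φ (doubleExtBracket B₁ φ X Y) Z
      + doubleExtBracket B₁ φ (doubleExtBracket B₁ φ Y Z) X
      + doubleExtBracket B₁ φ (doubleExtBracket B₁ φ Z X) Y).2.1 = 0 := by
  obtain ⟨x, a, -⟩ := X
  obtain ⟨y, b, -⟩ := Y
  obtain ⟨z, c, -⟩ := Z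
  simp only [Prod.snd_add, Prod.fst_add, doubleExtBracket_snd_fst, doubleExtBracket_fst, add_lie,
    sub_lie, map_add, map_sub, hφder, hφhom, LinearMap.sub_apply, Module.End.mul_apply]
  rw [← lie_skew a (φ _ _), ← lie_skew b (φ _ _), ← lie_skew c (φ _ _)]
  linear_combination (norm := module) lie_lie_add_lie_lie_add_lie_lie a b c

theorem doubleExtBracket_jacobi_snd_snd (hsymm : ∀ x y : L₁, B₁ x y = B₁ y x)
    (hinv : ∀ x y z : L₁, B₁ ⁅x, y⁆ z = B₁ x ⁅y, z⁆)
    (hφder : ∀ z : L₂, ∀ a b : L₁, φ z ⁅a, b⁆ = ⁅φ z a, b⁆ + ⁅a, φ z b⁆)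
    (hφskew : ∀ z : L₂, ∀ a b : L₁, B₁ (φ z a) b = - B₁ a (φ z b))
    (hφhom : ∀ w z : L₂, φ ⁅w, z⁆ = φ w * φ z - φ z * φ w) :
    (doubleExtBracket B₁ φ (doubleExtBracket B₁ φ X Y) Z
      + doubleExtBracket B₁ φ (doubleExtBracket B₁ φ Y Z) X
      + doubleExtBracket B₁ φ (doubleExtBracket B₁ φ Z X) Y).2.2 = 0 := by
  obtain ⟨x, a, f⟩ := X
  obtain ⟨y, b, g⟩ := Y
  obtain ⟨z, c, h⟩ := Z
  ext w
  simp only [Prod.snd_add, LinearMap.add_apply, doubleExtBracket_snd_snd_apply,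
    doubleExtBracket_snd_fst, doubleExtBracket_fst, lie_lie, hφhom, LinearMap.sub_apply,
    Module.End.mul_apply, map_add, map_sub, LinearMap.zero_apply]
  have hcomm (u : L₂) := apply_apply_eq_apply_apply_of_skew hsymm (hφskew u) (hφskew w)
  linear_combination
    cyclic_sum_apply_skew_derivation_lie_eq_zero hsymm hinv (hφder w) (hφskew w) a b c
      + hcomm z a b + hcomm x b c + hcomm y c a

theorem doubleExtBracket_jacobi (hsymm : ∀ x y : L₁, B₁ x y = B₁ y x)
    (hinv : ∀ x y z : L₁, B₁ ⁅x, y⁆ z = B₁ x ⁅y, z⁆)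
    (hφder : ∀ z : L₂, ∀ a b : L₁, φ z ⁅a, b⁆ = ⁅φ z a, b⁆ + ⁅a, φ z b⁆)
    (hφskew : ∀ z : L₂, ∀ a b : L₁, B₁ (φ z a) b = - B₁ a (φ z b))
    (hφhom : ∀ w z : L₂, φ ⁅w, z⁆ = φ w * φ z - φ z * φ w) :
    doubleExtBracket B₁ φ (doubleExtBracket B₁ φ X Y) Z
      + doubleExtBracket B₁ φ (doubleExtBracket B₁ φ Y Z) X
      + doubleExtBracket B₁ φ (doubleExtBracket B₁ φ Z X) Y = 0 :=
  Prod.ext (by simpa using lie_lie_add_lie_lie_add_lie_lie X.1 Y.1 Z.1) <|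
    Prod.ext (doubleExtBracket_jacobi_snd_fst B₁ φ X Y Z hφder hφhom)
      (doubleExtBracket_jacobi_snd_snd B₁ φ X Y Z hsymm hinv hφder hφskew hφhom)

end DoubleExtension

section
variable {K : Type*} [Field K] [CharZero K]
  {L₁ : Type*} [LieRing L₁] [LieAlgebra K L₁]
  {L₂ : Type*} [LieRing L₂] [LieAlgebra K L₂]

theorem doubleExtBracket_isLieBracket_general
    (B₁ : LinearMap.BilinForm K L₁)
    (hsymm : ∀ x y : L₁, B₁ x y = B₁ y x)
    (hinv : ∀ x y z : L₁, B₁ ⁅x, y⁆ z = B₁ x ⁅y, z⁆)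
    (φ : L₂ →ₗ[K] Module.End K L₁)
    (hφder : ∀ z : L₂, ∀ a b : L₁, φ z ⁅a, b⁆ = ⁅φ z a, b⁆ + ⁅a, φ z b⁆)
    (hφskew : ∀ z : L₂, ∀ a b : L₁, B₁ (φ z a) b = - B₁ a (φ z b))
    (hφhom : ∀ w z : L₂, φ ⁅w, z⁆ = φ w * φ z - φ z * φ w) :
    (∀ X Y Z : L₂ × L₁ × Module.Dual K L₂,
        doubleExtBracket B₁ φ (X + Y) Z
          = doubleExtBracket B₁ φ X Z + doubleExtBracket B₁ φ Y Z) ∧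
    (∀ (c : K) (X Y : L₂ × L₁ × Module.Dual K L₂),
        doubleExtBracket B₁ φ (c • X) Y = c • doubleExtBracket B₁ φ X Y) ∧
    (∀ X : L₂ × L₁ × Module.Dual K L₂, doubleExtBracket B₁ φ X X = 0) ∧
    (∀ X Y Z : L₂ × L₁ × Module.Dual K L₂,
        doubleExtBracket B₁ φ (doubleExtBracket B₁ φ X Y) Z
          + doubleExtBracket B₁ φ (doubleExtBracket B₁ φ Y Z) X
          + doubleExtBracket B₁ φ (doubleExtBracket B₁ φ Z X) Y = 0) :=
  ⟨doubleExtBracket_add_left B₁ φ, fun c X Y => doubleExtBracket_smul_left B₁ φ X Y c,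
    fun X => doubleExtBracket_self B₁ φ X hsymm hφskew,
    fun X Y Z => doubleExtBracket_jacobi B₁ φ X Y Z hsymm hinv hφder hφskew hφhom⟩

/-- The double extension of a quadratic Lie algebra `(g₁,B₁)` by a Lie algebra `g₂` via a
homomorphism `φ : g₂ → Der(g₁,B₁)` is a Lie algebra: the bracket above is bilinear,
alternating, and satisfies the Jacobi identity. -/
theorem doubleExtBracket_isLieBracket
    (B₁ : LinearMap.BilinForm K L₁)
    (hB : B₁.Nondegenerate)
    (hsymm : ∀ x y : L₁, B₁ x y = B₁ y x)
    (hinv : ∀ x y z : L₁, B₁ ⁅x, y⁆ z = B₁ x ⁅y, z⁆)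
    (φ : L₂ →ₗ[K] Module.End K L₁)
    (hφder : ∀ z : L₂, ∀ a b : L₁, φ z ⁅a, b⁆ = ⁅φ z a, b⁆ + ⁅a, φ z b⁆)
    (hφskew : ∀ z : L₂, ∀ a b : L₁, B₁ (φ z a) b = - B₁ a (φ z b))
    (hφhom : ∀ w z : L₂, φ ⁅w, z⁆ = φ w * φ z - φ z * φ w) :
    (∀ X Y Z : L₂ × L₁ × Module.Dual K L₂,
        doubleExtBracket B₁ φ (X + Y) Z
          = doubleExtBracket B₁ φ X Z + doubleExtBracket B₁ φ Y Z) ∧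
    (∀ (c : K) (X Y : L₂ × L₁ × Module.Dual K L₂),
        doubleExtBracket B₁ φ (c • X) Y = c • doubleExtBracket B₁ φ X Y) ∧
    (∀ X : L₂ × L₁ × Module.Dual K L₂, doubleExtBracket B₁ φ X X = 0) ∧
    (∀ X Y Z : L₂ × L₁ × Module.Dual K L₂,
        doubleExtBracket B₁ φ (doubleExtBracket B₁ φ X Y) Z
          + doubleExtBracket B₁ φ (doubleExtBracket B₁ φ Y Z) X
          + doubleExtBracket B₁ φ (doubleExtBracket B₁ φ Z X) Y = 0) :=
  doubleExtBracket_isLieBracket_general B₁ hsymm hinv φ hφder hφskew hφhom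

end
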